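/- arXiv:1309.1429 — 3 statements merged into one kernel-verified Lean document; each statement's English description precedes it below -/
import Mathlib

section
/- Let a finite group G act on a weighted set S where each weight is a product of powers of variables, and let g ∈ G. Then the sum of the weights of the multisets of elements of S fixed by g equals exp( Σ_{m=1}^∞ p_m[fix(g^m)] / m ), where fix(h) is the sum of weights of elements of S fixed by h, and p_m[u] denotes the formal power series u with every variable replaced by its m-th power. -/
/-!
Let `a_N` be the number of `g`-fixed multisets of weight `N`. A multiset fixed by `g` is a sum
of `⟨g⟩`-orbits, so removing `k` copies of the orbit of `s` is a bijection from the fixed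
multisets of weight `N` containing `s` at least `k` times onto those of weight
`N - k · period g s · w s`. Summing the weights of the elements of all fixed multisets of weight
`N` therefore gives `N a_N = ∑_{1 ≤ j ≤ N} b_j a_{N - j}` with `b_j = ∑_{period g t · w t ∣ j} w t`,
and regrouping by `m = j / w t` shows that `b_j = ∑_{m ∣ j} (j / m) fix(g ^ m)_{j / m}` is the
coefficient of `x ^ j` in `x f'`. Hence `A = ∑ a_N x ^ N` solves `A' = f' A` with `A(0) = 1`,
and such a solution is unique.
-/

open PowerSeries

open Finset MulAction

namespace PowerSeries

variable {R : Type*}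

theorem eq_of_derivative_eq_derivative_mul [CommRing R] [IsAddTorsionFree R] {f E A : R⟦X⟧}
    (hE : d⁄dX R E = d⁄dX R f * E) (hA : d⁄dX R A = d⁄dX R f * A)
    (h0 : constantCoeff E = constantCoeff A) : E = A := by
  ext n
  induction n using Nat.strong_induction_on with
  | _ n ih =>
    rcases n with _ | n
    · simpa using h0
    · have h : coeff (n + 1) E * (n + 1) = coeff (n + 1) A * (n + 1) := by
        rw [← coeff_derivative, ← coeff_derivative, hE, hA, coeff_mul, coeff_mul]
        refine sum_congr rfl fun p hp => ?_
        rw [ih p.2 (by have := mem_antidiagonal.mp hp; omega)]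
      refine nsmul_right_injective (M := R) n.succ_ne_zero ?_
      simpa only [nsmul_eq_mul, Nat.cast_succ, mul_comm] using h

theorem derivative_eq_derivative_mul_of_coeff [CommSemiring R] {f A : R⟦X⟧}
    (h : ∀ n : ℕ, n * coeff n A = ∑ j ∈ Icc 1 n, j * coeff j f * coeff (n - j) A) :
    d⁄dX R A = d⁄dX R f * A := by
  ext n
  rw [coeff_derivative, coeff_mul, mul_comm, ← Nat.cast_succ, h,
    Nat.sum_antidiagonal_eq_sum_range_succ_mk, range_eq_Ico, ← Ico_add_one_right_eq_Icc,
    ← sum_Ico_add' _ 0 (n + 1) 1]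
  refine sum_congr rfl fun j _ => ?_
  rw [coeff_derivative, Nat.cast_succ, mul_comm (coeff (j + 1) f), Nat.succ_sub_succ]

end PowerSeries

theorem Finset.sum_eq_sum_Icc_card_filter_le {ι : Type*} (F : Finset ι) (c : ι → ℕ) (N : ℕ)
    (hc : ∀ x ∈ F, c x ≤ N) : ∑ x ∈ F, c x = ∑ k ∈ Icc 1 N, #{x ∈ F | k ≤ c x} := by
  simp_rw [card_filter]
  rw [sum_comm]
  refine sum_congr rfl fun x hx => ?_
  have : {k ∈ Icc 1 N | k ≤ c x} = Icc 1 (c x) := by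
    ext k
    simp only [mem_filter, mem_Icc]
    have := hc x hx
    omega
  rw [← card_filter, this, Nat.card_Icc, Nat.add_sub_cancel]

theorem Finset.sum_Icc_mul_le_eq_sum_Icc_dvd {M : Type*} [AddCommMonoid M] (f : ℕ → M) {q : ℕ}
    (hq : 0 < q) (N : ℕ) :
    ∑ k ∈ Icc 1 N, (if k * q ≤ N then f (k * q) else 0) =
      ∑ j ∈ Icc 1 N, if q ∣ j then f j else 0 := by
  rw [← sum_filter, ← sum_filter]
  refine sum_nbij' (· * q) (· / q) (fun k hk => ?_) (fun j hj => ?_)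
    (fun k _ => Nat.mul_div_cancel k hq) (fun j hj => Nat.div_mul_cancel (mem_filter.mp hj).2)
    fun _ _ => rfl
  · simp only [mem_filter, mem_Icc] at hk ⊢
    exact ⟨⟨Nat.one_le_iff_ne_zero.mpr (Nat.mul_ne_zero (by omega) hq.ne'), hk.2⟩,
      dvd_mul_left q k⟩
  · simp only [mem_filter, mem_Icc] at hj ⊢
    exact ⟨⟨Nat.div_pos (Nat.le_of_dvd (by omega) hj.2) hq, (Nat.div_le_self j q).trans hj.1.2⟩,
      (Nat.div_mul_le_self j q).trans hj.1.2⟩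

theorem Nat.card_subtype_eq_card_filter {α : Type*} (T : Finset α) {p : α → Prop}
    [DecidablePred p] (hT : ∀ x, p x → x ∈ T) : Nat.card {x // p x} = #{x ∈ T | p x} := by
  rw [← Nat.card_eq_finsetCard]
  exact Nat.card_congr (Equiv.subtypeEquivRight fun x => by simpa using fun h => hT x h)

theorem Nat.div_eq_and_mul_dvd_iff {j m p d : ℕ} (hj : 0 < j) (hd : 0 < d) :
    (j / d = m ∧ p * d ∣ j) ↔ (m ∣ j ∧ p ∣ m ∧ d = j / m) := by
  constructor
  · rintro ⟨rfl, h⟩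
    have hdj : d ∣ j := (dvd_mul_left d p).trans h
    refine ⟨Nat.div_dvd_of_dvd hdj, ?_, (Nat.div_div_self hdj hj.ne').symm⟩
    rwa [Nat.dvd_div_iff_mul_dvd hdj, mul_comm]
  · rintro ⟨hmj, hpm, rfl⟩
    refine ⟨Nat.div_div_self hmj hj.ne', ?_⟩
    simpa only [Nat.mul_div_cancel' hmj] using mul_dvd_mul_right hpm (j / m)

theorem Nat.cast_sum_ite_dvd_div_mul {K : Type*} [Field K] [CharZero K] (j : ℕ) (c : ℕ → ℕ) :
    ((∑ m ∈ Icc 1 j, if m ∣ j then j / m * c m else 0 : ℕ) : K) =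
      j * ∑ m ∈ Icc 1 j, if m ∣ j then (m : K)⁻¹ * c m else 0 := by
  rw [Nat.cast_sum, mul_sum]
  refine sum_congr rfl fun m hm => ?_
  split_ifs with hmj
  · have : (m : K) ≠ 0 := Nat.cast_ne_zero.mpr (by have := (mem_Icc.mp hm).1; omega)
    rw [Nat.cast_mul, Nat.cast_div hmj this, div_eq_mul_inv, mul_assoc]
  · simp

namespace MulAction

variable {G S : Type*} [Group G] [MulAction G S] (g : G) (s : S)

noncomputable def orbitMultiset : Multiset S :=
  (Multiset.range (period g s)).map (g ^ · • s)

theorem nodup_orbitMultiset : (orbitMultiset g s).Nodup := by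
  refine (Multiset.nodup_range _).map_on fun i hi j hj hij => ?_
  refine Function.iterate_injOn_Iio_minimalPeriod (Multiset.mem_range.mp hi)
    (Multiset.mem_range.mp hj) ?_
  simpa only [smul_iterate] using hij

variable {g s} in
theorem mem_orbitMultiset [Finite G] {t : S} :
    t ∈ orbitMultiset g s ↔ ∃ n : ℕ, g ^ n • s = t := by
  simp only [orbitMultiset, Multiset.mem_map, Multiset.mem_range]
  refine ⟨fun ⟨n, _, hn⟩ => ⟨n, hn⟩, fun ⟨n, hn⟩ => ⟨n % period g s, ?_, ?_⟩⟩
  · exact Nat.mod_lt _ (period_pos_of_orderOf_pos (orderOf_pos g) s)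
  · rw [pow_mod_period_smul, hn]

theorem map_smul_orbitMultiset [Finite G] :
    (orbitMultiset g s).map (g • ·) = orbitMultiset g s := by
  refine Multiset.eq_of_le_of_card_le ?_ (by rw [Multiset.card_map])
  rw [Multiset.le_iff_subset ((nodup_orbitMultiset g s).map (MulAction.injective g))]
  intro t ht
  obtain ⟨u, hu, rfl⟩ := Multiset.mem_map.mp ht
  obtain ⟨n, rfl⟩ := mem_orbitMultiset.mp hu
  exact mem_orbitMultiset.mpr ⟨n + 1, by rw [pow_succ', mul_smul]⟩

theorem sum_map_orbitMultiset {M : Type*} [AddCommMonoid M] (w : S → M)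
    (hw : ∀ (h : G) (t : S), w (h • t) = w t) :
    ((orbitMultiset g s).map w).sum = period g s • w s := by
  simp [orbitMultiset, hw]

theorem count_pow_smul_of_map_smul_eq [DecidableEq S] {M : Multiset S}
    (hM : M.map (g • ·) = M) (n : ℕ) : M.count (g ^ n • s) = M.count s := by
  induction n with
  | zero => rw [pow_zero, one_smul]
  | succ n ih =>
    conv_lhs => rw [← hM]
    rw [pow_succ', mul_smul, Multiset.count_map_eq_count' _ _ (MulAction.injective g), ih]

theorem nsmul_orbitMultiset_le_iff [Finite G] [DecidableEq S] {M : Multiset S}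
    (hM : M.map (g • ·) = M) (k : ℕ) : k • orbitMultiset g s ≤ M ↔ k ≤ M.count s := by
  have hcount : (orbitMultiset g s).count s = 1 :=
    Multiset.count_eq_one_of_mem (nodup_orbitMultiset g s) (mem_orbitMultiset.mpr ⟨0, by simp⟩)
  refine ⟨fun h => ?_, fun h => Multiset.le_iff_count.mpr fun t => ?_⟩
  · simpa [hcount] using Multiset.count_le_of_le s h
  · rw [Multiset.count_nsmul]
    by_cases ht : t ∈ orbitMultiset g s
    · obtain ⟨n, rfl⟩ := mem_orbitMultiset.mp ht
      rw [Multiset.count_eq_one_of_mem (nodup_orbitMultiset g s) ht, mul_one,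
        count_pow_smul_of_map_smul_eq g s hM]
      exact h
    · simp [Multiset.count_eq_zero_of_notMem ht]

end MulAction

section Weight

variable {S : Type*} (w : S → ℕ)

theorem finite_setOf_weight_le (hfin : ∀ n, {s : S | w s = n}.Finite) (N : ℕ) :
    {s : S | w s ≤ N}.Finite :=
  (Set.finite_Iic N).preimage' fun n _ => hfin n

theorem le_sum_map_of_mem {M : Multiset S} {s : S} (hs : s ∈ M) : w s ≤ (M.map w).sum :=
  Multiset.le_sum_of_mem (Multiset.mem_map_of_mem w hs)

theorem card_le_sum_map (hw1 : ∀ s, 1 ≤ w s) (M : Multiset S) :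
    Multiset.card M ≤ (M.map w).sum := by
  simpa using Multiset.card_nsmul_le_sum (s := M.map w) (a := 1) (by simp [hw1])

theorem finite_setOf_sum_map_eq (hw1 : ∀ s, 1 ≤ w s) (hfin : ∀ n, {s : S | w s = n}.Finite)
    (N : ℕ) : {M : Multiset S | (M.map w).sum = N}.Finite := by
  classical
  set T := (finite_setOf_weight_le w hfin N).toFinset
  refine (Set.finite_Iic (N • T.val)).subset fun M (hM : _ = N) =>
    Multiset.le_iff_count.mpr fun t => ?_
  rw [Multiset.count_nsmul]
  by_cases ht : t ∈ M
  · rw [Multiset.count_eq_one_of_mem T.nodup (by simpa [T] using hM ▸ le_sum_map_of_mem w ht),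
      mul_one]
    exact (Multiset.count_le_card t M).trans (hM ▸ card_le_sum_map w hw1 M)
  · simp [Multiset.count_eq_zero_of_notMem ht]

theorem sum_map_eq_sum_count_mul [DecidableEq S] (T : Finset S) {M : Multiset S}
    (hM : M.toFinset ⊆ T) : (M.map w).sum = ∑ t ∈ T, M.count t * w t := by
  rw [sum_multiset_map_count]
  refine sum_subset hM fun t _ ht => ?_
  rw [Multiset.count_eq_zero.mpr (by simpa using ht), zero_smul]

end Weight

section Fixed

variable {G S : Type*} [Group G] [MulAction G S] (g : G) (w : S → ℕ)

def fixedMultisetsOfWeight (N : ℕ) : Set (Multiset S) :=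
  {M | M.map (g • ·) = M ∧ (M.map w).sum = N}

theorem finite_fixedMultisetsOfWeight (hw1 : ∀ s, 1 ≤ w s)
    (hfin : ∀ n, {s : S | w s = n}.Finite) (N : ℕ) : (fixedMultisetsOfWeight g w N).Finite :=
  (finite_setOf_sum_map_eq w hw1 hfin N).subset fun _ hM => hM.2

variable {w}

theorem fixedMultisetsOfWeight_zero (hw1 : ∀ s, 1 ≤ w s) :
    fixedMultisetsOfWeight g w 0 = {0} := by
  ext M
  refine ⟨fun hM => Multiset.card_eq_zero.mp (Nat.le_zero.mp (hM.2 ▸ card_le_sum_map w hw1 M)),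
    ?_⟩
  rintro rfl
  simp [fixedMultisetsOfWeight]

variable (hw : ∀ (h : G) (t : S), w (h • t) = w t)
include hw

theorem sum_map_nsmul_orbitMultiset (s : S) (k : ℕ) :
    ((k • orbitMultiset g s).map w).sum = k * (period g s * w s) := by
  rw [Multiset.map_nsmul, Multiset.sum_nsmul, sum_map_orbitMultiset g s w hw, smul_eq_mul,
    smul_eq_mul]

variable [Finite G] [DecidableEq S]

theorem image_add_fixedMultisetsOfWeight (s : S) (k L : ℕ) :
    (k • orbitMultiset g s + ·) '' fixedMultisetsOfWeight g w L =
      {M ∈ fixedMultisetsOfWeight g w (L + k * (period g s * w s)) | k ≤ M.count s} := by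
  have hfix : (k • orbitMultiset g s).map (g • ·) = k • orbitMultiset g s := by
    rw [Multiset.map_nsmul, map_smul_orbitMultiset]
  ext M
  constructor
  · rintro ⟨M, ⟨hM, hML⟩, rfl⟩
    have hfix' : (k • orbitMultiset g s + M).map (g • ·) = k • orbitMultiset g s + M := by
      rw [Multiset.map_add, hM, hfix]
    refine ⟨⟨hfix', ?_⟩, (nsmul_orbitMultiset_le_iff g s hfix' k).mp le_self_add⟩
    rw [Multiset.map_add, Multiset.sum_add, hML, sum_map_nsmul_orbitMultiset g hw, add_comm]
  · rintro ⟨⟨hM, hMN⟩, hk⟩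
    obtain ⟨u, rfl⟩ :=
      Multiset.le_iff_exists_add.mp ((nsmul_orbitMultiset_le_iff g s hM k).mpr hk)
    refine ⟨u, ⟨?_, ?_⟩, rfl⟩
    · rwa [Multiset.map_add, hfix, add_right_inj] at hM
    · rw [Multiset.map_add, Multiset.sum_add, sum_map_nsmul_orbitMultiset g hw] at hMN
      omega

theorem ncard_fixedMultisetsOfWeight_le_count (s : S) (k N : ℕ) :
    {M ∈ fixedMultisetsOfWeight g w N | k ≤ M.count s}.ncard =
      if k * (period g s * w s) ≤ N then
        (fixedMultisetsOfWeight g w (N - k * (period g s * w s))).ncard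
      else 0 := by
  split_ifs with hN
  · obtain ⟨L, rfl⟩ := Nat.exists_eq_add_of_le' hN
    rw [Nat.add_sub_cancel, ← image_add_fixedMultisetsOfWeight g hw,
      Set.ncard_image_of_injective _ (add_right_injective _)]
  · convert Set.ncard_empty (Multiset S)
    refine Set.eq_empty_of_forall_notMem ?_
    rintro M ⟨⟨hM, hMN⟩, hk⟩
    obtain ⟨u, rfl⟩ :=
      Multiset.le_iff_exists_add.mp ((nsmul_orbitMultiset_le_iff g s hM k).mpr hk)
    rw [Multiset.map_add, Multiset.sum_add, sum_map_nsmul_orbitMultiset g hw] at hMN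
    omega

end Fixed

section Recurrence

variable {G S : Type*} [Group G] [MulAction G S] [DecidableEq S] (g : G) {w : S → ℕ}

-- `t` is fixed by `g ^ m` iff `period g t ∣ m`, and only `m = j / w t` can contribute for `t`.
theorem sum_ite_period_mul_dvd (hw1 : ∀ s, 1 ≤ w s) {j : ℕ} (hj : 0 < j) (T : Finset S)
    (hT : ∀ t, w t ≤ j → t ∈ T) :
    ∑ t ∈ T, (if period g t * w t ∣ j then w t else 0) =
      ∑ m ∈ Icc 1 j,
        if m ∣ j then j / m * Nat.card {t : S // g ^ m • t = t ∧ w t = j / m} else 0 := by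
  have hm : ∀ m ∈ Icc 1 j,
      (if m ∣ j then j / m * Nat.card {t : S // g ^ m • t = t ∧ w t = j / m} else 0) =
        ∑ t ∈ T, if m ∣ j ∧ period g t ∣ m ∧ w t = j / m then w t else 0 := by
    intro m _
    split_ifs with hmj
    · rw [Nat.card_subtype_eq_card_filter T fun t ht => hT t (ht.2.trans_le (Nat.div_le_self j m)),
        card_filter, mul_sum]
      refine sum_congr rfl fun t _ => ?_
      simp only [pow_smul_eq_iff_period_dvd, hmj, true_and]
      split_ifs with h
      · rw [h.2, mul_one]
      · rw [mul_zero]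
    · simp [hmj]
  rw [sum_congr rfl hm, sum_comm]
  refine sum_congr rfl fun t _ => ?_
  simp_rw [← Nat.div_eq_and_mul_dvd_iff hj (hw1 t), ite_and, sum_ite_eq]
  by_cases h : period g t * w t ∣ j
  · have hwt : w t ≤ j := Nat.le_of_dvd hj ((dvd_mul_left _ _).trans h)
    rw [if_pos (mem_Icc.mpr ⟨(Nat.one_le_div_iff (hw1 t)).mpr hwt, Nat.div_le_self j (w t)⟩)]
  · simp [h]

variable [Finite G] (hw : ∀ (h : G) (t : S), w (h • t) = w t) (hw1 : ∀ s, 1 ≤ w s)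
  (hfin : ∀ n, {s : S | w s = n}.Finite)
include hw hw1 hfin

theorem sum_count_fixedMultisetsOfWeight (s : S) (N : ℕ) :
    ∑ M ∈ (finite_fixedMultisetsOfWeight g w hw1 hfin N).toFinset, M.count s =
      ∑ j ∈ Icc 1 N,
        if period g s * w s ∣ j then (fixedMultisetsOfWeight g w (N - j)).ncard else 0 := by
  have hq : 0 < period g s * w s :=
    Nat.mul_pos (period_pos_of_orderOf_pos (orderOf_pos g) s) (hw1 s)
  have hcount : ∀ M ∈ (finite_fixedMultisetsOfWeight g w hw1 hfin N).toFinset, M.count s ≤ N :=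
    fun M hM => (Multiset.count_le_card s M).trans
      ((card_le_sum_map w hw1 M).trans ((Set.Finite.mem_toFinset _).mp hM).2.le)
  rw [sum_eq_sum_Icc_card_filter_le _ _ N hcount,
    ← sum_Icc_mul_le_eq_sum_Icc_dvd (fun j => (fixedMultisetsOfWeight g w (N - j)).ncard) hq]
  refine sum_congr rfl fun k _ => ?_
  rw [← ncard_fixedMultisetsOfWeight_le_count g hw, ← Set.ncard_coe_finset, coe_filter]
  simp only [Set.Finite.mem_toFinset]

theorem mul_ncard_fixedMultisetsOfWeight (N : ℕ) :
    N * (fixedMultisetsOfWeight g w N).ncard =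
      ∑ j ∈ Icc 1 N, (∑ m ∈ Icc 1 j,
        if m ∣ j then j / m * Nat.card {t : S // g ^ m • t = t ∧ w t = j / m} else 0) *
          (fixedMultisetsOfWeight g w (N - j)).ncard := by
  set F := (finite_fixedMultisetsOfWeight g w hw1 hfin N).toFinset
  set T := (finite_setOf_weight_le w hfin N).toFinset
  have hF : ∀ M ∈ F, (M.map w).sum = N := fun M hM => ((Set.Finite.mem_toFinset _).mp hM).2
  calc N * (fixedMultisetsOfWeight g w N).ncard
      = ∑ M ∈ F, (M.map w).sum := by
        rw [sum_congr rfl hF, sum_const, smul_eq_mul, mul_comm,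
          Set.ncard_eq_toFinset_card _ (finite_fixedMultisetsOfWeight g w hw1 hfin N)]
    _ = ∑ M ∈ F, ∑ t ∈ T, M.count t * w t := by
        refine sum_congr rfl fun M hM => sum_map_eq_sum_count_mul w T fun t ht => ?_
        simpa [T] using hF M hM ▸ le_sum_map_of_mem w (Multiset.mem_toFinset.mp ht)
    _ = ∑ t ∈ T, w t * ∑ j ∈ Icc 1 N,
          if period g t * w t ∣ j then (fixedMultisetsOfWeight g w (N - j)).ncard else 0 := by
        rw [sum_comm]
        refine sum_congr rfl fun t _ => ?_
        rw [← sum_count_fixedMultisetsOfWeight g hw hw1 hfin, mul_sum]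
        exact sum_congr rfl fun M _ => mul_comm _ _
    _ = ∑ j ∈ Icc 1 N, (∑ t ∈ T, if period g t * w t ∣ j then w t else 0) *
          (fixedMultisetsOfWeight g w (N - j)).ncard := by
        simp_rw [mul_sum, sum_mul]
        rw [sum_comm]
        refine sum_congr rfl fun j _ => sum_congr rfl fun t _ => ?_
        split_ifs <;> simp
    _ = _ := by
        refine sum_congr rfl fun j hj => ?_
        rw [sum_ite_period_mul_dvd g hw1 (mem_Icc.mp hj).1 T fun t ht => ?_]
        simpa [T] using ht.trans (mem_Icc.mp hj).2

end Recurrence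

-- `exp f` is encoded as the solution `E` of `E' = f' E` with `E(0) = 1`.
/-- **Fixed multisets lemma.** Let a finite group `G` act on a weighted set `S`
with monomial weights `x ^ w s` (with `w s ≥ 1` and finite weight-fibers, so that
all the generating functions are well-defined), and let `g ∈ G`.  Then the sum of
the weights of the multisets of elements of `S` fixed by `g` equals
`exp (Σ_{m ≥ 1} p_m[fix(g^m)] / m)`, where `fix(h)` is the generating function of
elements fixed by `h` and `p_m` replaces `x` by `x^m`.  The series
`f = Σ_{m ≥ 1} p_m[fix(g^m)]/m` is given coefficientwise (its coefficient at `x^j`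
is `Σ_{m ∣ j, 1 ≤ m ≤ j} (1/m)·fix(g^m)_{j/m}`), and `exp f` is encoded as the
unique series `E` with constant term `1` satisfying `E' = f' · E`; the conclusion
is that `E` agrees coefficientwise with the generating function of fixed
multisets. -/
theorem fixed_multisets_exp {G S : Type*} [Group G] [Fintype G] [MulAction G S]
    (w : S → ℕ) (hw : ∀ (h : G) (s : S), w (h • s) = w s)
    (hw1 : ∀ s : S, 1 ≤ w s) (hfin : ∀ n : ℕ, {s : S | w s = n}.Finite)
    (g : G) :
    ∀ E : PowerSeries ℚ, constantCoeff E = 1 →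
      E.derivativeFun =
        ((PowerSeries.mk fun j : ℕ =>
            ∑ m ∈ Finset.Icc 1 j,
              if m ∣ j then
                (m : ℚ)⁻¹ * (Nat.card {s : S // g ^ m • s = s ∧ w s = j / m} : ℚ)
              else 0 : PowerSeries ℚ)).derivativeFun * E →
      ∀ N : ℕ,
        PowerSeries.coeff N E =
          (Nat.card {M : Multiset S //
              (M.map fun s => g • s) = M ∧ (M.map w).sum = N} : ℚ) := by
  classical
  intro E hE0 hE N
  set A : ℚ⟦X⟧ := mk fun N => ((fixedMultisetsOfWeight g w N).ncard : ℚ)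
  have hEA : E = A := by
    refine eq_of_derivative_eq_derivative_mul hE
      (derivative_eq_derivative_mul_of_coeff fun n => ?_) ?_
    · simp only [A, coeff_mk]
      rw [← Nat.cast_mul, mul_ncard_fixedMultisetsOfWeight g hw hw1 hfin, Nat.cast_sum]
      refine sum_congr rfl fun j _ => ?_
      rw [Nat.cast_mul, Nat.cast_sum_ite_dvd_div_mul]
    · simp [A, hE0, fixedMultisetsOfWeight_zero g hw1]
  rw [hEA, coeff_mk]
  rfl
end

section
/- Let K_{n,k} denote the number of isomorphism classes of k-trees with n+k vertices. Then K_{n,k-1} = K_{n,k} whenever k ≥ n − 1. -/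
/-- The complete graph on the vertices of a finset `V`. -/
def completeOn {α : Type*} (V : Finset α) : SimpleGraph α :=
  SimpleGraph.fromRel fun a b => a ∈ V ∧ b ∈ V

/-- The star graph joining the vertex `v` to every vertex of `K`. -/
def starTo {α : Type*} (v : α) (K : Finset α) : SimpleGraph α :=
  SimpleGraph.fromRel fun a b => a = v ∧ b ∈ K

/-- `IsKTree k V G` : the graph `G`, with vertex set (the finset) `V`, is a
`k`-tree.  Recursively: the complete graph on `k` vertices is a `k`-tree, and a
graph obtained from a `k`-tree by adjoining a new vertex joined to all the
vertices of a `k`-clique is a `k`-tree. -/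
inductive IsKTree {α : Type*} (k : ℕ) : Finset α → SimpleGraph α → Prop
  | base (V : Finset α) (h : V.card = k) : IsKTree k V (completeOn V)
  | step (V : Finset α) (G : SimpleGraph α) (v : α) (K : Finset α)
      (ht : IsKTree k V G) (hv : v ∉ V) (hK : K ⊆ V) (hcard : K.card = k)
      (hclique : G.IsClique K) [DecidableEq α] :
      IsKTree k (insert v V) (G ⊔ starTo v K)

/-- `numKTrees n k` is the number `K_{n,k}` of isomorphism classes of `k`-trees
with `n + k` vertices (equivalently, with `n` hedra). -/
noncomputable def numKTrees (n k : ℕ) : ℕ :=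
  Nat.card (Quot fun G G' : {G : SimpleGraph (Fin (n + k)) // IsKTree k Finset.univ G} =>
    Nonempty (G.val ≃g G'.val))

/-!
Coning (adding a vertex adjacent to every vertex) turns a `k`-tree on `m` vertices into a
`(k+1)`-tree on `m + 1` vertices, and isomorphic cones have isomorphic bases, because an
isomorphism of cones can be corrected by the swap of two universal vertices.

Conversely, a `k`-tree on `N > k` vertices has at least `2k + 2 - N` universal vertices: when a
vertex is attached to a `k`-clique `K`, the old universal vertices together with `K` form a
clique, which has at most `k + 1` vertices, so all but at most one of them lie in `K`. Hence a
`(k+1)`-tree on at most `2k + 3` vertices has a universal vertex, and deleting it leaves a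
`k`-tree of which it is the cone. For `n ≤ k + 2` coning is therefore a bijection between the
isomorphism classes counted by `K_{n,k}` and by `K_{n,k+1}`.
-/

variable {α β : Type*}

@[simp] lemma completeOn_adj {V : Finset α} {a b : α} :
    (completeOn V).Adj a b ↔ a ≠ b ∧ a ∈ V ∧ b ∈ V := by
  simp only [completeOn, SimpleGraph.fromRel_adj]
  tauto

@[simp] lemma starTo_adj {v : α} {K : Finset α} {a b : α} :
    (starTo v K).Adj a b ↔ a ≠ b ∧ (a = v ∧ b ∈ K ∨ b = v ∧ a ∈ K) :=
  SimpleGraph.fromRel_adj _ _ _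

lemma completeOn_sup_starTo [DecidableEq α] (u : α) (V : Finset α) :
    completeOn V ⊔ starTo u V = completeOn (insert u V) := by
  ext a b
  simp only [SimpleGraph.sup_adj, completeOn_adj, starTo_adj, Finset.mem_insert]
  grind

lemma deleteIncidenceSet_completeOn [DecidableEq α] (V : Finset α) (u : α) :
    (completeOn V).deleteIncidenceSet u = completeOn (V.erase u) := by
  ext a b
  simp only [SimpleGraph.deleteIncidenceSet_adj, completeOn_adj, Finset.mem_erase]
  tauto

lemma deleteIncidenceSet_sup_starTo [DecidableEq α] (G : SimpleGraph α) (K : Finset α)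
    {u v : α} (hvu : v ≠ u) :
    (G ⊔ starTo v K).deleteIncidenceSet u = G.deleteIncidenceSet u ⊔ starTo v (K.erase u) := by
  ext a b
  simp only [SimpleGraph.deleteIncidenceSet_adj, SimpleGraph.sup_adj, starTo_adj,
    Finset.mem_erase]
  grind

lemma deleteIncidenceSet_sup_starTo_self {G : SimpleGraph α} {v : α} (hv : ∀ w, ¬G.Adj v w)
    (K : Finset α) : (G ⊔ starTo v K).deleteIncidenceSet v = G := by
  ext a b
  simp only [SimpleGraph.deleteIncidenceSet_adj, SimpleGraph.sup_adj, starTo_adj]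
  have : G.Adj a b → a ≠ v ∧ b ≠ v := fun hab =>
    ⟨by rintro rfl; exact hv b hab, by rintro rfl; exact hv a hab.symm⟩
  grind

lemma isKTree_completeOn_of_card_eq_succ {k : ℕ} {V : Finset α} (h : V.card = k + 1) :
    IsKTree k V (completeOn V) := by
  classical
  obtain ⟨v, hv⟩ := Finset.card_pos.1 (by omega : 0 < V.card)
  have hk : (V.erase v).card = k := by rw [Finset.card_erase_of_mem hv, h]; rfl
  have := IsKTree.step _ _ v _ (.base _ hk) (Finset.notMem_erase v V) subset_rfl hk
    fun a ha b hb hab => completeOn_adj.2 ⟨hab, ha, hb⟩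
  rwa [completeOn_sup_starTo, Finset.insert_erase hv] at this

/-- The constructor `IsKTree.step` carries its own `DecidableEq` instance; this eliminator
replaces it by the ambient one, so that `insert` in the goal and in the hypotheses agree. -/
@[elab_as_elim]
lemma IsKTree.induction [DecidableEq α] {k : ℕ} {motive : ∀ V G, IsKTree k V G → Prop}
    {V : Finset α} {G : SimpleGraph α} (h : IsKTree k V G)
    (base : ∀ (V : Finset α) (hV : V.card = k), motive V (completeOn V) (.base V hV))
    (step : ∀ (V : Finset α) (G : SimpleGraph α) (v : α) (K : Finset α) (ht : IsKTree k V G)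
      (hv : v ∉ V) (hK : K ⊆ V) (hcard : K.card = k) (hclique : G.IsClique (K : Set α)),
      motive V G ht →
        motive (insert v V) (G ⊔ starTo v K) (.step V G v K ht hv hK hcard hclique)) :
    motive V G h := by
  induction h with
  | base V hV => exact base V hV
  | step V G v K ht hv hK hcard hclique ih =>
    convert step V G v K ht hv hK hcard hclique ih

namespace IsKTree

variable {k : ℕ} {V : Finset α} {G : SimpleGraph α}

lemma mem_of_adj (h : IsKTree k V G) {a b : α} (hab : G.Adj a b) : a ∈ V ∧ b ∈ V := by
  induction h with
  | base V => exact (completeOn_adj.1 hab).2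
  | step V G v K _ _ hK _ _ ih =>
    rcases hab with hab | hab
    · exact (ih hab).imp (Finset.mem_insert_of_mem ·) (Finset.mem_insert_of_mem ·)
    · rcases (starTo_adj.1 hab).2 with ⟨rfl, hb⟩ | ⟨rfl, ha⟩
      · exact ⟨Finset.mem_insert_self _ _, Finset.mem_insert_of_mem (hK hb)⟩
      · exact ⟨Finset.mem_insert_of_mem (hK ha), Finset.mem_insert_self _ _⟩

lemma le_card (h : IsKTree k V G) : k ≤ V.card := by
  induction h with
  | base V hV => exact hV.ge
  | step V G v K _ hv _ _ _ ih => rw [Finset.card_insert_of_notMem hv]; omega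

lemma eq_completeOn (h : IsKTree k V G) (hV : V.card = k) : G = completeOn V := by
  cases h with
  | base => rfl
  | step V G v K ht hv =>
    have := ht.le_card
    rw [Finset.card_insert_of_notMem hv] at hV
    omega

lemma sup_starTo_adj_left (h : IsKTree k V G) {v : α} {K : Finset α} (hv : v ∉ V)
    (hK : K ⊆ V) {w : α} : (G ⊔ starTo v K).Adj v w ↔ w ∈ K := by
  have hvw : w ∈ K → v ≠ w := fun hw hvw => hv (hvw ▸ hK hw)
  rw [SimpleGraph.sup_adj, starTo_adj]
  constructor
  · rintro (hG | ⟨hne, ⟨-, hw⟩ | ⟨rfl, -⟩⟩)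
    · exact absurd (h.mem_of_adj hG).1 hv
    · exact hw
    · exact absurd rfl hne
  · exact fun hw => Or.inr ⟨hvw hw, Or.inl ⟨rfl, hw⟩⟩

lemma card_le_of_isClique (h : IsKTree k V G) {S : Finset α} (hS : G.IsClique (S : Set α)) :
    S.card ≤ k + 1 := by
  classical
  induction h generalizing S with
  | base V hV =>
    by_contra! hlt
    have hSV : S ⊆ V := fun x hx => by
      obtain ⟨y, hy, hyx⟩ := Finset.exists_mem_ne (by omega : 1 < S.card) x
      exact (completeOn_adj.1 (hS hx hy hyx.symm)).2.1
    have := Finset.card_le_card hSV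
    omega
  | step V G v K ht hv hK hcard _ ih =>
    by_cases hvS : v ∈ S
    · have hSK : S.erase v ⊆ K := fun x hx => (ht.sup_starTo_adj_left hv hK).1
        (hS hvS (Finset.mem_of_mem_erase hx) (Finset.ne_of_mem_erase hx).symm)
      have := Finset.card_le_card hSK
      have := Finset.card_erase_add_one hvS
      omega
    · refine ih fun a ha b hb hab => (hS ha hb hab).resolve_right fun hstar => ?_
      rcases (starTo_adj.1 hstar).2 with ⟨rfl, -⟩ | ⟨rfl, -⟩ <;> contradiction

lemma exists_universal_finset [DecidableEq α] (h : IsKTree k V G) (hk : k < V.card) :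
    ∃ U ⊆ V, 2 * k + 2 ≤ U.card + V.card ∧ ∀ u ∈ U, ∀ w ∈ V.erase u, G.Adj u w := by
  induction h using IsKTree.induction with
  | base V hV => omega
  | step V G v K ht hv hK hcard hclique ih =>
    rw [Finset.card_insert_of_notMem hv] at hk ⊢
    rcases (Nat.lt_succ_iff.1 hk).eq_or_lt with hVk | hVk
    · obtain rfl : K = V := Finset.eq_of_subset_of_card_le hK (by omega)
      refine ⟨insert v K, subset_rfl, by rw [Finset.card_insert_of_notMem hv]; omega, ?_⟩
      rw [ht.eq_completeOn hVk.symm, completeOn_sup_starTo]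
      exact fun u hu w hw =>
        completeOn_adj.2 ⟨(Finset.ne_of_mem_erase hw).symm, hu, Finset.mem_of_mem_erase hw⟩
    · obtain ⟨U, hUV, hUcard, hU⟩ := ih hVk
      -- `U ∪ K` is a clique, so at most one vertex of `U` lies outside `K`
      have hUK : G.IsClique ((U ∪ K : Finset α) : Set α) := by
        intro a ha b hb hab
        simp only [Finset.coe_union, Set.mem_union, Finset.mem_coe] at ha hb
        rcases ha with ha | ha
        · exact hU a ha b (Finset.mem_erase.2 ⟨hab.symm, hb.elim (hUV ·) (hK ·)⟩)
        rcases hb with hb | hb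
        · exact (hU b hb a (Finset.mem_erase.2 ⟨hab, hK ha⟩)).symm
        · exact hclique ha hb hab
      have := ht.card_le_of_isClique hUK
      have := Finset.card_union_add_card_inter U K
      refine ⟨U ∩ K, Finset.inter_subset_right.trans (hK.trans (Finset.subset_insert _ _)),
        by omega, fun u hu w hw => ?_⟩
      rw [Finset.mem_inter] at hu
      rcases Finset.mem_insert.1 (Finset.mem_of_mem_erase hw) with rfl | hwV
      · exact ((ht.sup_starTo_adj_left hv hK).2 hu.2).symm
      · exact Or.inl (hU u hu.1 w (Finset.mem_erase.2 ⟨Finset.ne_of_mem_erase hw, hwV⟩))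

lemma exists_universal [DecidableEq α] (h : IsKTree k V G) (hpos : 0 < V.card)
    (hV : V.card ≤ 2 * k + 1) :
    ∃ u ∈ V, ∀ w ∈ V.erase u, G.Adj u w := by
  rcases h.le_card.eq_or_lt with hVk | hVk
  · obtain ⟨u, hu⟩ := Finset.card_pos.1 hpos
    refine ⟨u, hu, fun w hw => ?_⟩
    rw [h.eq_completeOn hVk.symm]
    exact completeOn_adj.2 ⟨(Finset.ne_of_mem_erase hw).symm, hu, Finset.mem_of_mem_erase hw⟩
  · obtain ⟨U, hUV, hUcard, hU⟩ := h.exists_universal_finset hVk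
    obtain ⟨u, hu⟩ := Finset.card_pos.1 (by omega : 0 < U.card)
    exact ⟨u, hUV hu, hU u hu⟩

lemma sup_starTo [DecidableEq α] (h : IsKTree k V G) {u : α} (hu : u ∉ V) :
    IsKTree (k + 1) (insert u V) (G ⊔ starTo u V) := by
  induction h using IsKTree.induction with
  | base V hV =>
    rw [completeOn_sup_starTo]
    exact .base _ (by rw [Finset.card_insert_of_notMem hu, hV])
  | step V G v K ht hv hK hcard hclique ih =>
    rw [Finset.mem_insert, not_or] at hu
    have hclique' : (G ⊔ starTo u V).IsClique (insert u K : Set α) :=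
      (hclique.mono le_sup_left).insert fun b hb hub =>
        Or.inr (starTo_adj.2 ⟨hub, Or.inl ⟨rfl, hK hb⟩⟩)
    have := (ih hu.2).step _ _ v (insert u K) (by simp [Ne.symm hu.1, hv])
      (Finset.insert_subset_insert _ hK)
      (by rw [Finset.card_insert_of_notMem fun h => hu.2 (hK h), hcard]) (by simpa using hclique')
    have hgraph : G ⊔ starTo u V ⊔ starTo v (insert u K) =
        G ⊔ starTo v K ⊔ starTo u (insert v V) := by
      ext a b
      simp only [SimpleGraph.sup_adj, starTo_adj, Finset.mem_insert]
      tauto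
    rwa [Finset.insert_comm, hgraph] at this

lemma deleteIncidenceSet [DecidableEq α] (h : IsKTree (k + 1) V G) {u : α} (hu : u ∈ V)
    (huniv : ∀ w ∈ V.erase u, G.Adj u w) : IsKTree k (V.erase u) (G.deleteIncidenceSet u) := by
  induction h using IsKTree.induction with
  | base V hV =>
    rw [deleteIncidenceSet_completeOn]
    exact .base _ (by rw [Finset.card_erase_of_mem hu, hV]; rfl)
  | step V G v K ht hv hK hcard hclique ih =>
    have hadj_v := fun w => ht.sup_starTo_adj_left (w := w) hv hK
    by_cases huv : u = v
    · subst huv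
      obtain rfl : K = V := Finset.Subset.antisymm hK fun w hw => (hadj_v w).1 <|
        huniv w (Finset.mem_erase.2 ⟨ne_of_mem_of_not_mem hw hv, Finset.mem_insert_of_mem hw⟩)
      rw [deleteIncidenceSet_sup_starTo_self (fun w huw => hv (ht.mem_of_adj huw).1),
        Finset.erase_insert hv, ht.eq_completeOn hcard]
      exact isKTree_completeOn_of_card_eq_succ hcard
    · have huK : u ∈ K := (hadj_v u).1 <|
        (huniv v (Finset.mem_erase.2 ⟨Ne.symm huv, Finset.mem_insert_self _ _⟩)).symm
      have huniv' : ∀ w ∈ V.erase u, G.Adj u w := fun w hw =>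
        (huniv w (Finset.erase_subset_erase _ (Finset.subset_insert _ _) hw)).resolve_right
          fun hstar => by
            rcases (starTo_adj.1 hstar).2 with ⟨rfl, -⟩ | ⟨rfl, -⟩
            · exact huv rfl
            · exact hv (Finset.mem_of_mem_erase hw)
      have hclique' : (G.deleteIncidenceSet u).IsClique (K.erase u : Set α) := by
        intro a ha b hb hab
        simp only [Finset.coe_erase, Set.mem_sdiff, Finset.mem_coe, Set.mem_singleton_iff] at ha hb
        exact G.deleteIncidenceSet_adj.2 ⟨hclique ha.1 hb.1 hab, ha.2, hb.2⟩
      rw [Finset.erase_insert_of_ne (Ne.symm huv), deleteIncidenceSet_sup_starTo _ _ (Ne.symm huv)]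
      exact (ih (Finset.mem_of_mem_insert_of_ne hu huv) huniv').step _ _ v (K.erase u)
        (fun h => hv (Finset.mem_of_mem_erase h)) (Finset.erase_subset_erase _ hK)
        (by rw [Finset.card_erase_of_mem huK, hcard]; rfl) hclique'

end IsKTree

lemma SimpleGraph.map_sup (f : α → β) (G H : SimpleGraph α) :
    (G ⊔ H).map f = G.map f ⊔ H.map f := by
  ext a b
  simp only [SimpleGraph.map_adj', SimpleGraph.sup_adj]
  grind

lemma completeOn_map (f : α ↪ β) (V : Finset α) :
    (completeOn V).map f = completeOn (V.map f) := by
  ext a b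
  simp only [SimpleGraph.map_adj, completeOn_adj, Finset.mem_map]
  grind

lemma starTo_map (f : α ↪ β) (v : α) (K : Finset α) :
    (starTo v K).map f = starTo (f v) (K.map f) := by
  ext a b
  simp only [SimpleGraph.map_adj, starTo_adj, Finset.mem_map]
  aesop

namespace IsKTree

variable {k : ℕ} {V : Finset α} {G : SimpleGraph α}

lemma map (f : α ↪ β) (h : IsKTree k V G) : IsKTree k (V.map f) (G.map f) := by
  classical
  induction h using IsKTree.induction with
  | base V hV =>
    rw [completeOn_map]
    exact .base _ (by rw [Finset.card_map, hV])
  | step V G v K ht hv hK hcard hclique ih =>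
    rw [SimpleGraph.map_sup, starTo_map, Finset.map_insert]
    exact ih.step _ _ _ _ (by simpa using hv) (Finset.map_subset_map.2 hK)
      (by rw [Finset.card_map, hcard]) hclique.finsetMap

lemma comap (f : α ↪ β) {W : Finset β} {H : SimpleGraph β} (h : IsKTree k W H)
    (hW : (W : Set β) ⊆ Set.range f) :
    IsKTree k (W.preimage f f.injective.injOn) (H.comap f) := by
  classical
  have card_preimage {S : Finset β} (hS : (S : Set β) ⊆ Set.range f) :
      (S.preimage f f.injective.injOn).card = S.card := by
    rw [Finset.card_preimage, Finset.filter_true_of_mem fun x hx => hS hx]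
  induction h using IsKTree.induction with
  | base W hW' =>
    have : (completeOn W).comap f = completeOn (W.preimage f f.injective.injOn) := by
      ext a b
      simp [f.injective.ne_iff]
    rw [this]
    exact .base _ (by rw [card_preimage hW, hW'])
  | step W H v K ht hv hK hcard hclique ih =>
    obtain ⟨v, rfl⟩ := hW (Finset.mem_insert_self _ _)
    have hWsub : (W : Set β) ⊆ Set.range f := fun x hx => hW (Finset.mem_insert_of_mem hx)
    have hvertices : (insert (f v) W).preimage f f.injective.injOn =
        insert v (W.preimage f f.injective.injOn) := by
      ext a
      simp [f.injective.eq_iff]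
    have hgraph : (H ⊔ starTo (f v) K).comap f =
        H.comap f ⊔ starTo v (K.preimage f f.injective.injOn) := by
      ext a b
      simp [f.injective.eq_iff, f.injective.ne_iff]
    rw [hvertices, hgraph]
    exact (ih hWsub).step _ _ _ _ (by simpa using hv) (Finset.monotone_preimage f.injective hK)
      (by rw [card_preimage ((Finset.coe_subset.2 hK).trans hWsub), hcard])
      fun a ha b hb hab => hclique (by simpa using ha) (by simpa using hb) (f.injective.ne hab)

end IsKTree

namespace SimpleGraph

def cone (G : SimpleGraph α) : SimpleGraph (Option α) where
  Adj
    | some a, some b => G.Adj a b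
    | none, none => False
    | _, _ => True
  symm := ⟨by rintro (_ | a) (_ | b) h <;> first | trivial | exact G.adj_symm h⟩
  loopless := ⟨by rintro (_ | a) h; exacts [h, G.loopless.irrefl a h]⟩

variable {G : SimpleGraph α} {H : SimpleGraph β}

@[simp] lemma cone_adj_some_some {a b : α} : G.cone.Adj (some a) (some b) ↔ G.Adj a b := Iff.rfl

@[simp] lemma cone_adj_none_left {x : Option α} : G.cone.Adj none x ↔ x ≠ none := by
  cases x <;> simp [cone]

@[simp] lemma cone_adj_none_right {x : Option α} : G.cone.Adj x none ↔ x ≠ none := by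
  cases x <;> simp [cone]

lemma cone_eq_map_sup_starTo [Fintype α] :
    G.cone = G.map Function.Embedding.some ⊔ starTo none (Finset.univ.map .some) := by
  ext x y
  cases x <;> cases y <;> simp
  exact (map_adj_apply (f := .some)).symm

lemma eq_cone_comap_some {X : SimpleGraph (Option α)} (h : ∀ a, X.Adj none (some a)) :
    X = (X.comap some).cone := by
  ext x y
  cases x <;> cases y <;> simp [h, X.adj_comm _ none]

def Iso.cone (φ : G ≃g H) : G.cone ≃g H.cone where
  toEquiv := φ.toEquiv.optionCongr
  map_rel_iff' {x y} := by cases x <;> cases y <;> simp [φ.map_adj_iff]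

def Iso.swapOfUniversal [DecidableEq α] {X : SimpleGraph α} {u v : α}
    (hu : ∀ w ≠ u, X.Adj u w) (hv : ∀ w ≠ v, X.Adj v w) : X ≃g X where
  toEquiv := Equiv.swap u v
  map_rel_iff' {a b} := by
    have hu' (w : α) : X.Adj u w ↔ u ≠ w := ⟨Adj.ne, fun h => hu w h.symm⟩
    have hv' (w : α) : X.Adj v w ↔ v ≠ w := ⟨Adj.ne, fun h => hv w h.symm⟩
    have hu'' (w : α) : X.Adj w u ↔ w ≠ u := by rw [X.adj_comm, hu', ne_comm]
    have hv'' (w : α) : X.Adj w v ↔ w ≠ v := by rw [X.adj_comm, hv', ne_comm]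
    simp only [Equiv.swap_apply_def]
    split_ifs <;> simp_all

def Iso.ofCone [DecidableEq β] (φ : G.cone ≃g H.cone) : G ≃g H :=
  have hφ (w) (hw : w ≠ φ none) : H.cone.Adj (φ none) w := by
    rw [← φ.apply_symm_apply w, φ.map_adj_iff, cone_adj_none_left]
    exact fun h => hw (by rw [← h, φ.apply_symm_apply])
  -- composing with a swap of two universal vertices makes `none` fixed
  let ψ : G.cone ≃g H.cone := φ.trans (Iso.swapOfUniversal hφ fun _ => cone_adj_none_left.2)
  have hψ (a : α) : ψ (some a) = some (Equiv.removeNone ψ.toEquiv a) :=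
    (Equiv.removeNone_some ψ.toEquiv <| Option.ne_none_iff_exists'.1 fun h =>
      Option.some_ne_none a <| ψ.injective <| h.trans (Equiv.swap_apply_left _ _).symm).symm
  ⟨Equiv.removeNone ψ.toEquiv, fun {a b} => by
    rw [← cone_adj_some_some (G := H), ← hψ, ← hψ, ψ.map_adj_iff, cone_adj_some_some]⟩

end SimpleGraph

namespace IsKTree

open SimpleGraph

variable [Fintype α] [DecidableEq α] {k : ℕ}

lemma cone {G : SimpleGraph α} (h : IsKTree k .univ G) : IsKTree (k + 1) .univ G.cone := by
  have := (h.map .some).sup_starTo (u := none) (by simp)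
  rwa [← cone_eq_map_sup_starTo,
    show insert none (Finset.univ.map .some) = .univ by ext x; cases x <;> simp] at this

lemma exists_cone_iso {X : SimpleGraph (Option α)} (hX : IsKTree (k + 1) .univ X)
    (hcard : Fintype.card α ≤ 2 * k + 2) :
    ∃ Z : SimpleGraph α, IsKTree k .univ Z ∧ Nonempty (Z.cone ≃g X) := by
  obtain ⟨u, -, hu⟩ := hX.exists_universal (by simp) (by simp; omega)
  let σ := Equiv.swap u none
  let Y := X.comap σ
  have hY : IsKTree (k + 1) .univ Y := by
    simpa [Finset.preimage_univ] using hX.comap σ.toEmbedding (by simp)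
  have hnone (a : α) : Y.Adj none (some a) := by
    change X.Adj (σ none) (σ (some a))
    rw [Equiv.swap_apply_right]
    refine hu _ (Finset.mem_erase.2 ⟨fun h => ?_, Finset.mem_univ _⟩)
    exact Option.some_ne_none a (σ.injective (h.trans (Equiv.swap_apply_right u none).symm))
  have hZ := (hY.deleteIncidenceSet (Finset.mem_univ none) fun w hw => by
    obtain ⟨a, rfl⟩ := Option.ne_none_iff_exists'.1 (Finset.ne_of_mem_erase hw)
    exact hnone a).comap .some (by simp)
  refine ⟨Y.comap some, ?_, ⟨(eq_cone_comap_some hnone) ▸ Iso.comap σ X⟩⟩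
  convert hZ using 1
  · ext a; simp
  · ext a b; simp [deleteIncidenceSet_adj]

end IsKTree

abbrev IsoClasses (P : SimpleGraph α → Prop) : Type _ :=
  Quot fun G G' : {G // P G} => Nonempty (G.val ≃g G'.val)

lemma card_isoClasses_eq {P : SimpleGraph α → Prop} {Q : SimpleGraph β → Prop}
    (F : SimpleGraph α → SimpleGraph β) (hF : ∀ G, P G → Q (F G))
    (hF_iso : ∀ G G', Nonempty (F G ≃g F G') ↔ Nonempty (G ≃g G'))
    (hF_surj : ∀ H, Q H → ∃ G, P G ∧ Nonempty (F G ≃g H)) :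
    Nat.card (IsoClasses P) = Nat.card (IsoClasses Q) := by
  have hequiv : Equivalence fun H H' : {H // Q H} => Nonempty (H.val ≃g H'.val) :=
    ⟨fun _ => ⟨.refl⟩, fun ⟨e⟩ => ⟨e.symm⟩, fun ⟨e⟩ ⟨e'⟩ => ⟨e.trans e'⟩⟩
  refine Nat.card_eq_of_bijective
    (Quot.map (fun G => ⟨F G.1, hF _ G.2⟩) fun G G' => (hF_iso G.1 G'.1).2) ⟨?_, ?_⟩
  · rintro ⟨G⟩ ⟨G'⟩ h
    exact Quot.sound <| (hF_iso _ _).1 <| (hequiv.eqvGen_iff).1 (Quot.eqvGen_exact h)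
  · rintro ⟨H⟩
    obtain ⟨G, hG, hGH⟩ := hF_surj H.1 H.2
    exact ⟨Quot.mk _ ⟨G, hG⟩, Quot.sound hGH⟩

section

open SimpleGraph

variable [Fintype α] [Fintype β] {k : ℕ}

lemma card_isoClasses_isKTree_congr (e : α ≃ β) :
    Nat.card (IsoClasses (IsKTree k (.univ : Finset α))) =
      Nat.card (IsoClasses (IsKTree k (.univ : Finset β))) := by
  refine card_isoClasses_eq (·.map e.toEmbedding)
    (fun G hG => by simpa using hG.map e.toEmbedding)
    (fun G G' => ⟨fun ⟨φ⟩ => ⟨((Iso.map e G).trans φ).trans (Iso.map e G').symm⟩,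
      fun ⟨φ⟩ => ⟨((Iso.map e G).symm.trans φ).trans (Iso.map e G')⟩⟩) fun H hH => ?_
  refine ⟨H.map e.symm.toEmbedding, by simpa using hH.map e.symm.toEmbedding, ⟨?_⟩⟩
  exact (Iso.map e _).symm.trans (Iso.map e.symm H).symm

lemma card_isoClasses_isKTree_option [DecidableEq α] (hcard : Fintype.card α ≤ 2 * k + 2) :
    Nat.card (IsoClasses (IsKTree k (.univ : Finset α))) =
      Nat.card (IsoClasses (IsKTree (k + 1) (.univ : Finset (Option α)))) :=
  card_isoClasses_eq cone (fun _ => IsKTree.cone)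
    (fun _ _ => ⟨fun ⟨φ⟩ => ⟨φ.ofCone⟩, fun ⟨φ⟩ => ⟨φ.cone⟩⟩)
    fun _ hX => hX.exists_cone_iso hcard

end

/-- Stability: `K_{n,k-1} = K_{n,k}` whenever `k ≥ n - 1`. -/
theorem numKTrees_stable (n k : ℕ) (h : n - 1 ≤ k) :
    numKTrees n (k - 1) = numKTrees n k := by
  obtain _ | k := k
  · rfl
  calc numKTrees n k = Nat.card (IsoClasses (IsKTree k (.univ : Finset (Fin (n + k))))) := rfl
    _ = Nat.card (IsoClasses (IsKTree (k + 1) (.univ : Finset (Option (Fin (n + k)))))) :=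
      card_isoClasses_isKTree_option (by simp; omega)
    _ = numKTrees n (k + 1) := card_isoClasses_isKTree_congr (finSuccEquiv _).symm
end

section
/- (Otter's dissimilarity characteristic theorem) In any finite tree T, the number of vertex orbits under the automorphism group of T is exactly one more than the number of orbits of edges that are not symmetry edges, where a symmetry edge is an edge whose two endpoints are swapped by some automorphism of T. -/
/-!
For an edge `uv` of a finite tree, `sideCard u v` counts the vertices on the side of `u` once `uv`
is deleted; the two counts of an edge add up to `|V|` and are preserved by automorphisms. Send each
non-symmetry edge to its endpoint on the lighter side, an arbitrary one if the edge is balanced.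
A vertex is the lighter end of at most one edge, so this map is injective. A balanced edge that is
not a symmetry edge has both endpoints fixed by every automorphism, so the map is equivariant. The
vertices it misses are centroids, and two distinct centroids span a balanced edge, which must then
be a symmetry edge; so the missed vertices form a single orbit, nonempty because a tree has fewer
edges than vertices.
-/

/-- A symmetry edge of a graph: an edge whose two endpoints are swapped by some
automorphism. -/
def IsSymmetryEdge {V : Type*} (T : SimpleGraph V) (e : Sym2 V) : Prop :=
  ∃ (φ : T ≃g T) (u v : V), e = s(u, v) ∧ φ u = v ∧ φ v = u

open Function

namespace MulAction

variable {G X Y : Type*} [Group G] [MulAction G X] [MulAction G Y]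

lemma equivalence_exists_smul_eq : Equivalence fun x x' : X => ∃ g : G, g • x = x' where
  refl x := ⟨1, one_smul G x⟩
  symm := fun ⟨g, h⟩ => ⟨g⁻¹, by rw [← h, inv_smul_smul]⟩
  trans := fun ⟨g, h⟩ ⟨g', h'⟩ => ⟨g' * g, by rw [mul_smul, h, h']⟩

theorem card_quot_eq_add_one_of_injective [Finite Y] (f : Y → X) (hf : Injective f)
    (hsmul : ∀ (g : G) y, f (g • y) = g • f y) (hsurj : ¬ Surjective f)
    (hroot : ∀ x x', x ∉ Set.range f → x' ∉ Set.range f → ∃ g : G, g • x = x') :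
    Nat.card (Quot fun x x' : X => ∃ g : G, g • x = x') =
      Nat.card (Quot fun y y' : Y => ∃ g : G, g • y = y') + 1 := by
  obtain ⟨x₀, hx₀⟩ : ∃ x₀, x₀ ∉ Set.range f := by simpa [Surjective] using hsurj
  have hrange {g : G} {y : Y} {x : X} (h : g • f y = x) : x ∈ Set.range f :=
    ⟨g • y, by rw [hsmul, h]⟩
  let F : Option (Quot fun y y' : Y => ∃ g : G, g • y = y') →
      Quot fun x x' : X => ∃ g : G, g • x = x' :=
    fun o => o.elim (Quot.mk _ x₀)
      (Quot.lift (fun y => Quot.mk _ (f y)) fun _ _ ⟨g, h⟩ => Quot.sound ⟨g, by rw [← hsmul, h]⟩)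
  have hF : Bijective F := by
    constructor
    · rintro (_ | ⟨⟨y⟩⟩) (_ | ⟨⟨y'⟩⟩) h
      · rfl
      · obtain ⟨g, hg⟩ := (equivalence_exists_smul_eq.quot_mk_eq_iff _ _).mp h.symm
        exact (hx₀ (hrange hg)).elim
      · obtain ⟨g, hg⟩ := (equivalence_exists_smul_eq.quot_mk_eq_iff _ _).mp h
        exact (hx₀ (hrange hg)).elim
      · obtain ⟨g, hg⟩ := (equivalence_exists_smul_eq.quot_mk_eq_iff _ _).mp h
        exact congrArg some (Quot.sound ⟨g, hf (by rw [hsmul, hg])⟩)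
    · rintro ⟨x⟩
      by_cases hx : x ∈ Set.range f
      · obtain ⟨y, rfl⟩ := hx
        exact ⟨some (Quot.mk _ y), rfl⟩
      · exact ⟨none, Quot.sound (hroot x₀ x hx₀ hx)⟩
  rw [← Finite.card_option, Nat.card_eq_of_bijective F hF]

end MulAction

section IsSymmetryEdge

variable {V : Type*} {G : SimpleGraph V} {u v : V} {e : Sym2 V}

lemma isSymmetryEdge_mk_iff : IsSymmetryEdge G s(u, v) ↔ ∃ φ : G ≃g G, φ u = v ∧ φ v = u := by
  refine ⟨fun ⟨φ, a, b, he, ha, hb⟩ => ?_, fun ⟨φ, hu, hv⟩ => ⟨φ, u, v, rfl, hu, hv⟩⟩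
  rcases Sym2.eq_iff.mp he with ⟨rfl, rfl⟩ | ⟨rfl, rfl⟩
  exacts [⟨φ, ha, hb⟩, ⟨φ, hb, ha⟩]

lemma IsSymmetryEdge.map (φ : G ≃g G) (h : IsSymmetryEdge G e) : IsSymmetryEdge G (e.map φ) := by
  obtain ⟨ψ, u, v, rfl, hu, hv⟩ := h
  refine ⟨φ * ψ * φ⁻¹, φ u, φ v, Sym2.map_mk .., ?_, ?_⟩ <;>
    simp only [RelIso.mul_apply, RelIso.inv_apply_self, hu, hv]

lemma isSymmetryEdge_map_iff (φ : G ≃g G) : IsSymmetryEdge G (e.map φ) ↔ IsSymmetryEdge G e := by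
  refine ⟨fun h => ?_, .map φ⟩
  simpa [Sym2.map_map, Function.comp_def, RelIso.inv_apply_self] using h.map φ⁻¹

end IsSymmetryEdge

namespace SimpleGraph

variable {V : Type*} {G : SimpleGraph V} {u v w x y z : V} {e : Sym2 V}

def side (G : SimpleGraph V) (u v : V) : Set V :=
  {x | (G.deleteEdges {s(u, v)}).Reachable u x}

noncomputable def sideCard (G : SimpleGraph V) (u v : V) : ℕ :=
  (G.side u v).ncard

lemma mem_side_self : u ∈ G.side u v :=
  Reachable.refl u

lemma mem_side_of_adj (hx : x ∈ G.side u v) (h : G.Adj x y) (hne : s(x, y) ≠ s(u, v)) :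
    y ∈ G.side u v :=
  hx.trans (deleteEdges_adj.mpr ⟨h, hne⟩).reachable

lemma mem_side_or_mem_side (h : G.Reachable u x) (v : V) :
    x ∈ G.side u v ∨ x ∈ G.side v u := by
  obtain ⟨p⟩ := h.symm
  clear h
  induction p with
  | nil => exact .inl mem_side_self
  | @cons x y u hxy _ ih =>
    by_cases he : s(x, y) = s(u, v)
    · rcases Sym2.eq_iff.mp he with ⟨rfl, -⟩ | ⟨rfl, -⟩
      · exact .inl mem_side_self
      · exact .inr mem_side_self
    · refine ih.imp (mem_side_of_adj · hxy.symm ?_) (mem_side_of_adj · hxy.symm ?_)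
      · rwa [Sym2.eq_swap]
      · rwa [Sym2.eq_swap, Sym2.eq_swap (a := v)]

lemma side_subset_side (hw : w ∉ G.side u v) (hu : u ∈ G.side w z) :
    G.side u v ⊆ G.side w z := by
  classical
  rintro x ⟨p⟩
  refine hu.trans ⟨p.transfer _ fun e he => ?_⟩
  rw [edgeSet_deleteEdges]
  refine ⟨edgeSet_mono (deleteEdges_le _) (p.edges_subset_edgeSet he), ?_⟩
  rintro rfl
  exact hw ⟨p.takeUntil w (p.fst_mem_support_of_mem_edges he)⟩

lemma mem_side_map (φ : G ≃g G) (hx : x ∈ G.side u v) : φ x ∈ G.side (φ u) (φ v) := by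
  rw [side, Set.mem_ofPred_eq, reachable_deleteEdges_iff_exists_walk] at hx ⊢
  obtain ⟨p, hp⟩ := hx
  refine ⟨p.map φ.toHom, ?_⟩
  rwa [Walk.edges_map, ← Sym2.map_mk, show ⇑φ.toHom = ⇑φ from rfl,
    List.mem_map_of_injective (Sym2.map.injective φ.injective)]

lemma side_swap_eq_compl (hG : G.IsTree) (h : G.Adj u v) : G.side v u = (G.side u v)ᶜ := by
  ext x
  refine ⟨fun hv hu => ?_, (mem_side_or_mem_side (hG.connected.preconnected u x) v).resolve_left⟩
  rw [side, Set.mem_ofPred_eq, Sym2.eq_swap] at hv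
  exact isBridge_iff.mp (isAcyclic_iff_forall_adj_isBridge.mp hG.isAcyclic h) (hu.trans hv.symm)

lemma mem_side_swap_iff (hG : G.IsTree) (h : G.Adj u v) :
    x ∈ G.side v u ↔ x ∉ G.side u v := by
  rw [side_swap_eq_compl hG h, Set.mem_compl_iff]

lemma notMem_side_swap (hG : G.IsTree) (h : G.Adj u v) : u ∉ G.side v u :=
  (mem_side_swap_iff hG h).not_left.mpr mem_side_self

lemma exists_adj_mem_side (hG : G.IsTree) (hne : u ≠ x) : ∃ v, G.Adj u v ∧ x ∈ G.side v u := by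
  classical
  obtain ⟨p, hp⟩ := (hG.connected.preconnected u x).some.toPath
  cases p with
  | nil => exact absurd rfl hne
  | @cons _ v _ huv q =>
    rw [Walk.cons_isPath_iff] at hp
    refine ⟨v, huv, ⟨q.transfer _ fun e he => ?_⟩⟩
    rw [edgeSet_deleteEdges]
    refine ⟨q.edges_subset_edgeSet he, ?_⟩
    rintro rfl
    exact hp.2 (q.snd_mem_support_of_mem_edges he)

lemma side_swap_ssubset_side (hG : G.IsTree) (huv : G.Adj u v) (hvw : v ≠ w) :
    G.side v u ⊂ G.side u w := by
  have hv : v ∈ G.side u w := mem_side_of_adj mem_side_self huv (by simp [hvw, huv.ne'])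
  have hsub := side_subset_side (notMem_side_swap hG huv) hv
  exact (Set.ssubset_iff_of_subset hsub).mpr ⟨u, mem_side_self, notMem_side_swap hG huv⟩

def IsCentroid (G : SimpleGraph V) (c : V) : Prop :=
  ∀ v, G.Adj c v → G.sideCard v c ≤ G.sideCard c v

noncomputable def lighterEnd (G : SimpleGraph V) (e : Sym2 V) : V :=
  if G.sideCard e.out.2 e.out.1 < G.sideCard e.out.1 e.out.2 then e.out.2 else e.out.1

lemma lighterEnd_mem (e : Sym2 V) : G.lighterEnd e ∈ e := by
  unfold lighterEnd
  split_ifs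
  exacts [e.out_snd_mem, e.out_fst_mem]

lemma lighterEnd_eq_of_sideCard_lt (h : G.sideCard u v < G.sideCard v u) :
    G.lighterEnd s(u, v) = u := by
  have he : s((Quot.out s(u, v)).1, (Quot.out s(u, v)).2) = s(u, v) := Quot.out_eq _
  unfold lighterEnd
  generalize Quot.out s(u, v) = p at he ⊢
  rcases Sym2.eq_iff.mp he with ⟨rfl, rfl⟩ | ⟨rfl, rfl⟩ <;> simp [h, h.not_gt]

lemma sideCard_le_of_lighterEnd_eq (huv : u ≠ v) (h : G.lighterEnd s(u, v) = u) :
    G.sideCard u v ≤ G.sideCard v u := by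
  by_contra! hlt
  rw [Sym2.eq_swap, lighterEnd_eq_of_sideCard_lt hlt] at h
  exact huv h.symm

lemma exists_eq_mk_lighterEnd (he : e ∈ G.edgeSet) :
    ∃ v, G.Adj (G.lighterEnd e) v ∧ e = s(G.lighterEnd e, v) ∧
      G.sideCard (G.lighterEnd e) v ≤ G.sideCard v (G.lighterEnd e) := by
  have hv := Sym2.other_spec (lighterEnd_mem (G := G) e)
  have hadj : G.Adj (G.lighterEnd e) (Sym2.Mem.other (lighterEnd_mem (G := G) e)) := by
    rwa [← mem_edgeSet, hv]
  refine ⟨_, hadj, hv.symm, sideCard_le_of_lighterEnd_eq hadj.ne ?_⟩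
  rw [hv]

abbrev NonSymmetryEdge (G : SimpleGraph V) : Type _ :=
  {e : G.edgeSet // ¬ IsSymmetryEdge G e}

instance : MulAction (G ≃g G) G.NonSymmetryEdge where
  smul φ e :=
    ⟨⟨e.1.1.map φ, φ.map_mem_edgeSet_iff.mpr e.1.2⟩, (isSymmetryEdge_map_iff φ).not.mpr e.2⟩
  one_smul e := Subtype.ext <| Subtype.ext <| congrFun Sym2.map_id e.1.1
  mul_smul φ ψ e := Subtype.ext <| Subtype.ext <| (Sym2.map_map (g := ⇑φ) (f := ⇑ψ) e.1.1).symm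

variable [Finite V]

lemma sideCard_add_sideCard_swap (hG : G.IsTree) (h : G.Adj u v) :
    G.sideCard u v + G.sideCard v u = Nat.card V := by
  rw [sideCard, sideCard, side_swap_eq_compl hG h]
  exact Set.ncard_add_ncard_compl _

lemma sideCard_swap_lt (hG : G.IsTree) (huv : G.Adj u v) (hvw : v ≠ w) :
    G.sideCard v u < G.sideCard u w :=
  Set.ncard_lt_ncard (side_swap_ssubset_side hG huv hvw)

lemma eq_of_sideCard_le_of_sideCard_le (hG : G.IsTree) (huv : G.Adj u v) (huw : G.Adj u w)
    (hv : G.sideCard u v ≤ G.sideCard v u) (hw : G.sideCard u w ≤ G.sideCard w u) : v = w := by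
  by_contra hvw
  have := sideCard_swap_lt hG huv hvw
  have := sideCard_swap_lt hG huw (Ne.symm hvw)
  omega

lemma sideCard_map (φ : G ≃g G) (u v : V) : G.sideCard (φ u) (φ v) = G.sideCard u v := by
  have hle (ψ : G ≃g G) (a b : V) : G.sideCard a b ≤ G.sideCard (ψ a) (ψ b) := by
    rw [sideCard, ← Set.ncard_image_of_injective _ ψ.injective]
    exact Set.ncard_le_ncard (Set.image_subset_iff.mpr fun _ => mem_side_map ψ)
  refine le_antisymm ?_ (hle φ u v)
  simpa using hle φ.symm (φ u) (φ v)

lemma sideCard_eq_of_isSymmetryEdge (h : IsSymmetryEdge G s(u, v)) :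
    G.sideCard u v = G.sideCard v u := by
  obtain ⟨φ, hu, hv⟩ := isSymmetryEdge_mk_iff.mp h
  rw [← sideCard_map φ, hu, hv]

lemma isCentroid_of_sideCard_eq (hG : G.IsTree) (huv : G.Adj u v)
    (h : G.sideCard u v = G.sideCard v u) : G.IsCentroid u := by
  intro w huw
  rcases eq_or_ne w v with rfl | hwv
  · exact h.ge
  · have := sideCard_swap_lt hG huw hwv
    have := sideCard_add_sideCard_swap hG huv
    have := sideCard_add_sideCard_swap hG huw
    omega

/- Let `d`, `d'` be the neighbours of `u`, `v` towards each other. If `u`, `v` are not adjacent,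
the side of `u` at `ud` lies strictly inside the side of `d'` at `vd'`, which is impossible when
both `u` and `v` are centroids. -/
lemma IsCentroid.adj_of_ne (hG : G.IsTree) (hu : G.IsCentroid u) (hv : G.IsCentroid v)
    (hne : u ≠ v) : G.Adj u v := by
  obtain ⟨d, hud, hvd⟩ := exists_adj_mem_side hG hne
  obtain ⟨d', hvd', hud'⟩ := exists_adj_mem_side hG hne.symm
  by_contra hnadj
  have hdv : d ≠ v := by rintro rfl; exact hnadj hud
  have hd' : d' ∉ G.side u d := fun hd' => (mem_side_swap_iff hG hud).mp hvd
    (mem_side_of_adj hd' hvd'.symm (by simp [hdv.symm, hne.symm]))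
  have hd : d ∈ G.side d' v := (mem_side_swap_iff hG hvd').mpr fun hd =>
    (mem_side_swap_iff hG hvd').mp hud' (mem_side_of_adj hd hud.symm (by simp [hdv, hne]))
  have hlt : G.sideCard u d < G.sideCard d' v := Set.ncard_lt_ncard <|
    (Set.ssubset_iff_of_subset (side_subset_side hd' hud')).mpr
      ⟨d, hd, notMem_side_swap hG hud.symm⟩
  have := hu d hud
  have := hv d' hvd'
  have := sideCard_add_sideCard_swap hG hud
  have := sideCard_add_sideCard_swap hG hvd'
  omega

lemma apply_mem_of_sideCard_eq (hG : G.IsTree) (huv : G.Adj u v)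
    (h : G.sideCard u v = G.sideCard v u) (φ : G ≃g G) : φ u = u ∨ φ u = v := by
  by_contra! hφ
  have hc : G.IsCentroid (φ u) := isCentroid_of_sideCard_eq hG (φ.map_adj_iff.mpr huv)
    (by rw [sideCard_map, sideCard_map, h])
  have hadj := (isCentroid_of_sideCard_eq hG huv h).adj_of_ne hG hc hφ.1.symm
  exact hφ.2 (eq_of_sideCard_le_of_sideCard_le hG huv hadj h.le (hc u hadj.symm)).symm

lemma apply_eq_self_of_sideCard_eq (hG : G.IsTree) (huv : G.Adj u v)
    (h : G.sideCard u v = G.sideCard v u) (hns : ¬ IsSymmetryEdge G s(u, v)) (φ : G ≃g G) :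
    φ u = u := by
  refine (apply_mem_of_sideCard_eq hG huv h φ).resolve_right fun hu => ?_
  rcases apply_mem_of_sideCard_eq hG huv.symm h.symm φ with hv | hv
  · exact huv.ne (φ.injective (hu.trans hv.symm))
  · exact hns (isSymmetryEdge_mk_iff.mpr ⟨φ, hu, hv⟩)

lemma lighterEnd_injOn (hG : G.IsTree) : Set.InjOn G.lighterEnd G.edgeSet := by
  intro e he e' he' h
  obtain ⟨v, hv, hev, hvle⟩ := exists_eq_mk_lighterEnd he
  obtain ⟨w, hw, hew, hwle⟩ := exists_eq_mk_lighterEnd he'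
  rw [← h] at hw hwle
  rw [hev, hew, ← h, eq_of_sideCard_le_of_sideCard_le hG hv hw hvle hwle]

lemma lighterEnd_map (hG : G.IsTree) (φ : G ≃g G) (he : e ∈ G.edgeSet)
    (hns : ¬ IsSymmetryEdge G e) : G.lighterEnd (e.map φ) = φ (G.lighterEnd e) := by
  induction e using Sym2.ind with | h u v =>
  have huv : G.Adj u v := he
  rw [Sym2.map_mk]
  rcases lt_trichotomy (G.sideCard u v) (G.sideCard v u) with h | h | h
  · rw [lighterEnd_eq_of_sideCard_lt h,
      lighterEnd_eq_of_sideCard_lt (by rwa [sideCard_map, sideCard_map])]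
  · have hu := apply_eq_self_of_sideCard_eq hG huv h hns φ
    have hv := apply_eq_self_of_sideCard_eq hG huv.symm h.symm (by rwa [Sym2.eq_swap]) φ
    rcases Sym2.mem_iff.mp (lighterEnd_mem (G := G) s(u, v)) with h' | h' <;>
      simp only [hu, hv, h']
  · rw [Sym2.eq_swap, lighterEnd_eq_of_sideCard_lt (by rwa [sideCard_map, sideCard_map]),
      Sym2.eq_swap (a := u), lighterEnd_eq_of_sideCard_lt h]

lemma isCentroid_of_notMem_range
    (hx : x ∉ Set.range fun e : G.NonSymmetryEdge => G.lighterEnd e.1.1) : G.IsCentroid x := by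
  intro v hxv
  by_contra! hlt
  exact hx ⟨⟨⟨s(x, v), hxv⟩, fun hs => hlt.ne (sideCard_eq_of_isSymmetryEdge hs)⟩,
    lighterEnd_eq_of_sideCard_lt hlt⟩

lemma exists_smul_eq_of_notMem_range (hG : G.IsTree)
    (hx : x ∉ Set.range fun e : G.NonSymmetryEdge => G.lighterEnd e.1.1)
    (hy : y ∉ Set.range fun e : G.NonSymmetryEdge => G.lighterEnd e.1.1) :
    ∃ φ : G ≃g G, φ • x = y := by
  rcases eq_or_ne x y with rfl | hne
  · exact ⟨1, rfl⟩
  have hxy := (isCentroid_of_notMem_range hx).adj_of_ne hG (isCentroid_of_notMem_range hy) hne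
  by_contra! hφ
  have hns : ¬ IsSymmetryEdge G s(x, y) := by
    rw [isSymmetryEdge_mk_iff]
    exact fun ⟨φ, h, _⟩ => hφ φ h
  rcases Sym2.mem_iff.mp (lighterEnd_mem (G := G) s(x, y)) with h | h
  exacts [hx ⟨⟨⟨_, hxy⟩, hns⟩, h⟩, hy ⟨⟨⟨_, hxy⟩, hns⟩, h⟩]

lemma not_surjective_lighterEnd (hG : G.IsTree) :
    ¬ Surjective fun e : G.NonSymmetryEdge => G.lighterEnd e.1.1 := by
  intro hs
  have h1 := Nat.card_le_card_of_surjective _ hs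
  have h2 : Nat.card G.NonSymmetryEdge ≤ Nat.card G.edgeSet := Finite.card_subtype_le _
  have h3 := (isTree_iff_connected_and_card.mp hG).2
  omega

end SimpleGraph

theorem otter_dissimilarity_general {V : Type*} [Fintype V]
    (T : SimpleGraph V) (hT : T.IsTree) :
    Nat.card (Quot fun u v : V => ∃ φ : T ≃g T, φ u = v) =
      Nat.card (Quot fun e f : {e : T.edgeSet // ¬ IsSymmetryEdge T e.val} =>
        ∃ φ : T ≃g T, Sym2.map φ e.val.val = f.val.val) + 1 := by
  have hedge : (fun e f : T.NonSymmetryEdge => ∃ φ : T ≃g T, e.val.val.map φ = f.val.val) =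
      fun e f => ∃ φ : T ≃g T, φ • e = f := by
    ext e f
    simp only [Subtype.ext_iff]
    rfl
  rw [hedge]
  exact MulAction.card_quot_eq_add_one_of_injective _
    (fun e e' h => Subtype.ext <| Subtype.ext <| SimpleGraph.lighterEnd_injOn hT e.1.2 e'.1.2 h)
    (fun φ e => SimpleGraph.lighterEnd_map hT φ e.1.2 e.2)
    (SimpleGraph.not_surjective_lighterEnd hT)
    fun _ _ => SimpleGraph.exists_smul_eq_of_notMem_range hT

/-- **Otter's dissimilarity characteristic theorem.** In any finite tree, the
number of orbits of vertices under the automorphism group is exactly one more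
than the number of orbits of edges that are not symmetry edges. -/
theorem otter_dissimilarity {V : Type*} [Fintype V] [Nonempty V]
    (T : SimpleGraph V) (hT : T.IsTree) :
    Nat.card (Quot fun u v : V => ∃ φ : T ≃g T, φ u = v) =
      Nat.card (Quot fun e f : {e : T.edgeSet // ¬ IsSymmetryEdge T e.val} =>
        ∃ φ : T ≃g T, Sym2.map φ e.val.val = f.val.val) + 1 :=
  otter_dissimilarity_general T hT
end
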